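/- Homogeneity and unit coefficients of the recursion polynomials: for every k ≥ 1, a_k is a homogeneous polynomial of degree k in x, y and b_k is a homogeneous polynomial of degree k−1 in x, y; moreover for every k ≥ 2 the coefficient of x²y^{k−2} in a_k has absolute value 1, and for every k ≥ 1 the coefficient of y^{k−1} in b_k has absolute value 1. -/

import Mathlib

/-- The polynomials a_k ∈ ℂ[x,y] : a₁ = 0, a₂ = x²,
    a_k = −y·a_{k−1} + (4(2k−3)(2k−5))⁻¹·x²·a_{k−2} for k ≥ 3. -/
noncomputable def aPoly : ℕ → MvPolynomial (Fin 2) ℂ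
  | 0 => 0
  | 1 => 0
  | 2 => MvPolynomial.X 0 ^ 2
  | (k + 3) => -(MvPolynomial.X 1) * aPoly (k + 2)
      + MvPolynomial.C (4 * (2 * (k : ℂ) + 3) * (2 * (k : ℂ) + 1))⁻¹ *
        (MvPolynomial.X 0 ^ 2 * aPoly (k + 1))

/-- The polynomials b_k ∈ ℂ[x,y] : b₁ = 1, b₂ = −y + x/2,
    b_k = −y·b_{k−1} + (4(2k−3)(2k−5))⁻¹·x²·b_{k−2} for k ≥ 3. -/
noncomputable def bPoly : ℕ → MvPolynomial (Fin 2) ℂ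
  | 0 => 0
  | 1 => 1
  | 2 => -(MvPolynomial.X 1) + MvPolynomial.C ((2 : ℂ)⁻¹) * MvPolynomial.X 0
  | (k + 3) => -(MvPolynomial.X 1) * bPoly (k + 2)
      + MvPolynomial.C (4 * (2 * (k : ℂ) + 3) * (2 * (k : ℂ) + 1))⁻¹ *
        (MvPolynomial.X 0 ^ 2 * bPoly (k + 1))

open MvPolynomial

/-! Both families satisfy `p (k+3) = -y · p (k+2) + c k · x² · p (k+1)`, which raises the degree
by one per step, so homogeneity propagates from the first two terms. The `x²`-term never reaches
the monomials `y^m` (for `b`), nor `x² y^m` (for `a`, as `x²` divides every `a_k`); along these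
monomials the recursion is multiplication by `-y`, so the coefficients are `±1`. -/

theorem MvPolynomial.coeff_X_pow_mul_of_lt {σ R : Type*} [CommSemiring R] {i : σ} {n : ℕ}
    {s : σ →₀ ℕ} (h : s i < n) (q : MvPolynomial σ R) : (X i ^ n * q).coeff s = 0 := by
  rw [X_pow_eq_monomial, coeff_monomial_mul', if_neg]
  exact fun hle => (Finsupp.single_le_iff.mp hle).not_gt h

section Recursion

variable {R : Type*} [CommRing R] {c : ℕ → R} {p : ℕ → MvPolynomial (Fin 2) R}

theorem isHomogeneous_of_recursion
    (hp : ∀ k, p (k + 3) = -X 1 * p (k + 2) + C (c k) * (X 0 ^ 2 * p (k + 1)))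
    {d : ℕ} (h₁ : (p 1).IsHomogeneous d) (h₂ : (p 2).IsHomogeneous (d + 1)) (k : ℕ) :
    (p (k + 1)).IsHomogeneous (d + k) := by
  induction k using Nat.twoStepInduction with
  | zero => exact h₁
  | one => exact h₂
  | more k ih₀ ih₁ =>
    rw [hp]
    have hy := (isHomogeneous_X R 1).neg.mul ih₁
    have hx := ((isHomogeneous_X_pow 0 2).mul ih₀).C_mul (c k)
    rw [show 1 + (d + (k + 1)) = d + (k + 2) by omega] at hy
    rw [show 2 + (d + k) = d + (k + 2) by omega] at hx
    exact hy.add hx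

theorem dvd_of_recursion
    (hp : ∀ k, p (k + 3) = -X 1 * p (k + 2) + C (c k) * (X 0 ^ 2 * p (k + 1)))
    {r : MvPolynomial (Fin 2) R} (h₁ : r ∣ p 1) (h₂ : r ∣ p 2) (k : ℕ) :
    r ∣ p (k + 1) := by
  induction k using Nat.twoStepInduction with
  | zero => exact h₁
  | one => exact h₂
  | more k ih₀ ih₁ =>
    rw [hp]
    exact (ih₁.mul_left _).add ((ih₀.mul_left _).mul_left _)

theorem coeff_single_one_add_of_recursion
    (hp : ∀ k, p (k + 3) = -X 1 * p (k + 2) + C (c k) * (X 0 ^ 2 * p (k + 1)))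
    {s : Fin 2 →₀ ℕ} (hs : ∀ j m, (X 0 ^ 2 * p (j + 1)).coeff (Finsupp.single 1 m + s) = 0)
    (k : ℕ) : (p (k + 2)).coeff (Finsupp.single 1 k + s) = (-1) ^ k * (p 2).coeff s := by
  induction k with
  | zero => simp
  | succ k ih =>
    rw [hp, coeff_add, coeff_C_mul, hs, mul_zero, add_zero, neg_mul, coeff_neg,
      show Finsupp.single 1 (k + 1) + s = Finsupp.single 1 1 + (Finsupp.single 1 k + s) by
        rw [← add_assoc, ← Finsupp.single_add, add_comm 1 k],
      coeff_X_mul, ih, pow_succ]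
    ring

end Recursion

theorem isHomogeneous_aPoly (k : ℕ) : (aPoly (k + 1)).IsHomogeneous (k + 1) := by
  simpa [add_comm] using isHomogeneous_of_recursion aPoly.eq_4 (d := 1)
    (isHomogeneous_zero _ _ _) (isHomogeneous_X_pow _ _) k

theorem isHomogeneous_bPoly (k : ℕ) : (bPoly (k + 1)).IsHomogeneous k := by
  simpa using isHomogeneous_of_recursion bPoly.eq_4 (d := 0) (isHomogeneous_one _ _)
    ((isHomogeneous_X _ _).neg.add (isHomogeneous_C_mul_X _ _)) k

theorem coeff_aPoly (k : ℕ) :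
    (aPoly (k + 2)).coeff (Finsupp.single 0 2 + Finsupp.single 1 k) = (-1) ^ k := by
  have hs (j m : ℕ) :
      (X 0 ^ 2 * aPoly (j + 1)).coeff (Finsupp.single 1 m + Finsupp.single 0 2) = 0 := by
    obtain ⟨q, hq⟩ : X 0 ^ 2 ∣ aPoly (j + 1) :=
      dvd_of_recursion aPoly.eq_4 (dvd_zero _) dvd_rfl j
    rw [hq, ← mul_assoc, ← pow_add]
    exact coeff_X_pow_mul_of_lt (by simp) q
  rw [add_comm, coeff_single_one_add_of_recursion aPoly.eq_4 hs k]
  simp [aPoly, X_pow_eq_monomial]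

theorem coeff_bPoly (k : ℕ) : (bPoly (k + 1)).coeff (Finsupp.single 1 k) = (-1) ^ k := by
  cases k with
  | zero => simp [bPoly]
  | succ k =>
    have hs (j m : ℕ) :
        (X 0 ^ 2 * bPoly (j + 1)).coeff (Finsupp.single 1 m + Finsupp.single 1 1) = 0 :=
      coeff_X_pow_mul_of_lt (by simp) _
    rw [Finsupp.single_add, coeff_single_one_add_of_recursion bPoly.eq_4 hs k]
    simp [bPoly, pow_succ]

theorem recursion_polys_homogeneous_and_unit_coeffs :
    (∀ k : ℕ, 1 ≤ k → (aPoly k).IsHomogeneous k) ∧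
    (∀ k : ℕ, 1 ≤ k → (bPoly k).IsHomogeneous (k - 1)) ∧
    (∀ k : ℕ, 2 ≤ k →
      ‖(aPoly k).coeff (Finsupp.single 0 2 + Finsupp.single 1 (k - 2))‖ = 1) ∧
    (∀ k : ℕ, 1 ≤ k →
      ‖(bPoly k).coeff (Finsupp.single 1 (k - 1))‖ = 1) := by
  refine ⟨?_, ?_, ?_, ?_⟩
  · rintro (_ | k) hk
    · omega
    · exact isHomogeneous_aPoly k
  · rintro (_ | k) hk
    · omega
    · exact isHomogeneous_bPoly k
  · rintro (_ | _ | k) hk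
    · omega
    · omega
    · simp [coeff_aPoly]
  · rintro (_ | k) hk
    · omega
    · simp [coeff_bPoly]
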